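/- For |q|<1 and c not equal to 1 or a negative integer power of q, the series ₀φ₁ satisfies ₀φ₁(−; cq; q, xq) = (c − x) · ₀φ₁(−; cq; q, xq²) + (1 − c) · ₀φ₁(−; c; q, x). -/

import Mathlib

open scoped BigOperators

/-- q-shifted factorial (a;q)_j -/
noncomputable def qPoch (a q : ℂ) (j : ℕ) : ℂ :=
  ∏ i ∈ Finset.range j, (1 - a * q ^ i)

/-- infinite q-shifted factorial (a;q)_∞ -/
noncomputable def qPochInf (a q : ℂ) : ℂ :=
  ∏' j : ℕ, (1 - a * q ^ j)

/-- basic hypergeometric series ₁φ₁(a; c; q, x) -/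
noncomputable def phi11 (a c q x : ℂ) : ℂ :=
  ∑' j : ℕ, qPoch a q j / (qPoch q q j * qPoch c q j) *
    (-1) ^ j * q ^ (j * (j - 1) / 2) * x ^ j

/-- basic hypergeometric series ₀φ₁(–; c; q, x) -/
noncomputable def phi01 (c q x : ℂ) : ℂ :=
  ∑' j : ℕ, q ^ (j * (j - 1)) * x ^ j / (qPoch q q j * qPoch c q j)

/-- basic hypergeometric series ₂φ₁(a, b; c; q, x) -/
noncomputable def phi21 (a b c q x : ℂ) : ℂ :=
  ∑' j : ℕ, qPoch a q j * qPoch b q j / (qPoch q q j * qPoch c q j) * x ^ j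

/-!
Write `T j` for the terms of `₀φ₁(−; cq; q, x)`. The three series in the recurrence are
`∑ q^j T j`, `∑ q^{2j} T j` and `(1 - c)⁻¹ ∑ (1 - c q^j) T j`, the last one because
`(c; q)_j (1 - c q^j) = (1 - c) (cq; q)_j`. The recurrence thereby becomes the q-difference
equation `∑ (1 - q^j) (1 - c q^j) T j = x ∑ q^{2j} T j`, which is the index shift
`(1 - q^{j+1}) (1 - c q^{j+1}) T (j + 1) = x q^{2j} T j`.
-/

open Filter Topology

noncomputable def phi01Term (c q x : ℂ) (j : ℕ) : ℂ :=
  q ^ (j * (j - 1)) * x ^ j / (qPoch q q j * qPoch c q j)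

section QPochhammer

variable {a q : ℂ}

lemma qPoch_succ (a q : ℂ) (j : ℕ) : qPoch a q (j + 1) = qPoch a q j * (1 - a * q ^ j) :=
  Finset.prod_range_succ _ _

lemma qPoch_succ' (a q : ℂ) (j : ℕ) : qPoch a q (j + 1) = (1 - a) * qPoch (a * q) q j := by
  simp only [qPoch, Finset.prod_range_succ', pow_succ', pow_zero, mul_one, mul_comm (1 - a),
    mul_assoc]

lemma qPoch_ne_zero (h : ∀ n : ℕ, a * q ^ n ≠ 1) (j : ℕ) : qPoch a q j ≠ 0 :=
  Finset.prod_ne_zero_iff.2 fun i _ => sub_ne_zero.2 (h i).symm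

lemma mul_pow_ne_one_of_norm_lt_one (hq : ‖q‖ < 1) (n : ℕ) : q * q ^ n ≠ 1 := by
  intro h
  have hnorm : ‖q‖ ^ (n + 1) < 1 := pow_lt_one₀ (norm_nonneg q) hq n.succ_ne_zero
  rw [← norm_pow, pow_succ', h, norm_one] at hnorm
  exact hnorm.false

end QPochhammer

section Phi01Term

variable {c q : ℂ}

lemma phi01Term_mul_right (c q x y : ℂ) (j : ℕ) :
    phi01Term c q (x * y) j = y ^ j * phi01Term c q x j := by
  unfold phi01Term
  rw [mul_pow]
  ring

-- Where a factor of the denominator vanishes, both sides are `0` since `a / 0 = 0`.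
lemma phi01Term_succ (c q x : ℂ) (j : ℕ) :
    phi01Term c q x (j + 1) =
      phi01Term c q x j * ((q ^ j) ^ 2 * x / ((1 - q * q ^ j) * (1 - c * q ^ j))) := by
  have hexp : (j + 1) * (j + 1 - 1) = j * (j - 1) + j * 2 := by
    cases j with
    | zero => rfl
    | succ k => simp only [Nat.add_sub_cancel]; ring
  unfold phi01Term
  rw [div_mul_div_comm, qPoch_succ, qPoch_succ, hexp, pow_add, pow_mul, pow_succ x]
  ring

lemma mul_phi01Term_succ (hq : ‖q‖ < 1) (hc : ∀ n : ℕ, c * q ^ n ≠ 1) (x : ℂ) (j : ℕ) :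
    (1 - q * q ^ j) * (1 - c * q ^ j) * phi01Term c q x (j + 1) =
      (q ^ j) ^ 2 * x * phi01Term c q x j := by
  have h₁ : (1 : ℂ) - q * q ^ j ≠ 0 := sub_ne_zero.2 (mul_pow_ne_one_of_norm_lt_one hq j).symm
  have h₂ : (1 : ℂ) - c * q ^ j ≠ 0 := sub_ne_zero.2 (hc j).symm
  rw [phi01Term_succ, mul_div_assoc', mul_div_assoc', mul_div_cancel_left₀ _ (mul_ne_zero h₁ h₂)]
  ring

lemma one_sub_mul_phi01Term (hc : ∀ n : ℕ, c * q ^ n ≠ 1) (x : ℂ) (j : ℕ) :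
    (1 - c) * phi01Term c q x j = (1 - c * q ^ j) * phi01Term (c * q) q x j := by
  have hC : qPoch c q j ≠ 0 := qPoch_ne_zero hc j
  have hCq : qPoch (c * q) q j ≠ 0 :=
    qPoch_ne_zero (fun n => by simpa only [mul_assoc, ← pow_succ'] using hc (n + 1)) j
  have hratio : (1 - c) / qPoch c q j = (1 - c * q ^ j) / qPoch (c * q) q j := by
    rw [div_eq_div_iff hC hCq, ← qPoch_succ', qPoch_succ]
    ring
  unfold phi01Term
  calc (1 - c) * (q ^ (j * (j - 1)) * x ^ j / (qPoch q q j * qPoch c q j))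
      = q ^ (j * (j - 1)) * x ^ j / qPoch q q j * ((1 - c) / qPoch c q j) := by ring
    _ = q ^ (j * (j - 1)) * x ^ j / qPoch q q j * ((1 - c * q ^ j) / qPoch (c * q) q j) := by
        rw [hratio]
    _ = _ := by ring

lemma summable_phi01Term (hq : ‖q‖ < 1) (c x : ℂ) : Summable (phi01Term c q x) := by
  have hpow := tendsto_pow_atTop_nhds_zero_of_norm_lt_one hq
  have hr : Tendsto (fun j => (q ^ j) ^ 2 * x / ((1 - q * q ^ j) * (1 - c * q ^ j))) atTop
      (𝓝 0) := by
    rw [show (0 : ℂ) = 0 ^ 2 * x / ((1 - q * 0) * (1 - c * 0)) by simp]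
    exact ((hpow.pow 2).mul_const x).div
      (((hpow.const_mul q).const_sub 1).mul ((hpow.const_mul c).const_sub 1)) (by simp)
  refine summable_of_ratio_norm_eventually_le (r := 1 / 2) (by norm_num) ?_
  filter_upwards [hr.norm.eventually_lt_const (by norm_num : ‖(0 : ℂ)‖ < 1 / 2)] with j hj
  rw [phi01Term_succ, norm_mul, mul_comm]
  exact mul_le_mul_of_nonneg_right hj.le (norm_nonneg _)

lemma hasSum_phi01 (hq : ‖q‖ < 1) (c x : ℂ) : HasSum (phi01Term c q x) (phi01 c q x) :=
  (summable_phi01Term hq c x).hasSum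

lemma hasSum_pow_mul_phi01Term (hq : ‖q‖ < 1) (c x y : ℂ) :
    HasSum (fun j => y ^ j * phi01Term c q x j) (phi01 c q (x * y)) := by
  simpa only [funext (phi01Term_mul_right c q x y)] using hasSum_phi01 hq c (x * y)

end Phi01Term

section Phi01

variable {c q : ℂ}

lemma phi01_qDifference (hq : ‖q‖ < 1) (hc : ∀ n : ℕ, c * q ^ (n + 1) ≠ 1) (x : ℂ) :
    phi01 (c * q) q x - (1 + c) * phi01 (c * q) q (x * q) + c * phi01 (c * q) q (x * q ^ 2) =
      x * phi01 (c * q) q (x * q ^ 2) := by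
  have hcq : ∀ n : ℕ, c * q * q ^ n ≠ 1 := fun n => by
    simpa only [mul_assoc, ← pow_succ'] using hc n
  set T := phi01Term (c * q) q x
  set S : ℕ → ℂ := fun j => (1 - q ^ j) * (1 - c * q ^ j) * T j with hS_def
  have hT₂ := hasSum_pow_mul_phi01Term hq (c * q) x (q ^ 2)
  have hS : HasSum S (phi01 (c * q) q x - (1 + c) * phi01 (c * q) q (x * q) +
      c * phi01 (c * q) q (x * q ^ 2)) := by
    have hS_eq : S = fun j => T j - (1 + c) * (q ^ j * T j) + c * ((q ^ 2) ^ j * T j) :=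
      funext fun j => by ring
    rw [hS_eq]
    exact ((hasSum_phi01 hq (c * q) x).sub
      ((hasSum_pow_mul_phi01Term hq (c * q) x q).mul_left (1 + c))).add (hT₂.mul_left c)
  have hS_succ : HasSum (fun j => S (j + 1)) (x * phi01 (c * q) q (x * q ^ 2)) := by
    have hS_succ_eq : (fun j => S (j + 1)) = fun j => x * ((q ^ 2) ^ j * T j) := by
      funext j
      have hshift := mul_phi01Term_succ hq hcq x j
      rw [← pow_succ', mul_assoc c q, ← pow_succ'] at hshift
      simp only [hS_def, T]
      rw [hshift]
      ring
    rw [hS_succ_eq]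
    exact hT₂.mul_left x
  rw [hasSum_nat_add_iff 1] at hS_succ
  simpa [hS_def] using hS.unique hS_succ

lemma one_sub_mul_phi01 (hq : ‖q‖ < 1) (hc : ∀ n : ℕ, c * q ^ n ≠ 1) (x : ℂ) :
    (1 - c) * phi01 c q x = phi01 (c * q) q x - c * phi01 (c * q) q (x * q) := by
  refine ((hasSum_phi01 hq c x).mul_left (1 - c)).unique ?_
  have hterm : (fun j => (1 - c) * phi01Term c q x j) =
      fun j => phi01Term (c * q) q x j - c * (q ^ j * phi01Term (c * q) q x j) := by
    funext j
    rw [one_sub_mul_phi01Term hc]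
    ring
  rw [hterm]
  exact (hasSum_phi01 hq (c * q) x).sub ((hasSum_pow_mul_phi01Term hq (c * q) x q).mul_left c)

end Phi01

theorem phi01_three_term_recurrence (q c x : ℂ) (hq : ‖q‖ < 1)
    (hc : ∀ n : ℕ, c * q ^ n ≠ 1) :
    phi01 (c * q) q (x * q)
      = (c - x) * phi01 (c * q) q (x * q ^ 2) + (1 - c) * phi01 c q x := by
  linear_combination -one_sub_mul_phi01 hq hc x - phi01_qDifference hq (fun n => hc (n + 1)) x
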